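/- Let M be a projective left R-module. Then every A ∈ 𝒜 is a projective left R-module if and only if every quotient module of every M-𝒜-injective left R-module is M-𝒜-injective. -/

import Mathlib

open TensorProduct MulOpposite CategoryTheory

universe u

section NC

variable (R : Type u) [Ring R]

/-- The defining relations of the tensor product `N ⊗[R] X` of a right `R`-module `N`
and a left `R`-module `X` over a (possibly noncommutative) ring `R`, inside `N ⊗[ℤ] X`. -/
def ncRel (N : Type u) [AddCommGroup N] [Module Rᵐᵒᵖ N]
    (X : Type u) [AddCommGroup X] [Module R X] : Submodule ℤ (N ⊗[ℤ] X) :=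
  Submodule.span ℤ {z | ∃ (r : R) (n : N) (x : X), z = (op r • n) ⊗ₜ[ℤ] x - n ⊗ₜ[ℤ] (r • x)}

/-- The tensor product `N ⊗[R] X` of a right `R`-module `N` and a left `R`-module `X`
over a (possibly noncommutative) ring `R`. -/
abbrev NCTensor (N : Type u) [AddCommGroup N] [Module Rᵐᵒᵖ N]
    (X : Type u) [AddCommGroup X] [Module R X] : Type u :=
  (N ⊗[ℤ] X) ⧸ ncRel R N X

/-- Functoriality of the tensor product in the left (right-module) variable. -/
noncomputable def ncMapL {N N' : Type u} [AddCommGroup N] [Module Rᵐᵒᵖ N]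
    [AddCommGroup N'] [Module Rᵐᵒᵖ N'] (g : N →ₗ[Rᵐᵒᵖ] N')
    (X : Type u) [AddCommGroup X] [Module R X] :
    NCTensor R N X →ₗ[ℤ] NCTensor R N' X :=
  Submodule.mapQ _ _ (LinearMap.rTensor X g.toAddMonoidHom.toIntLinearMap) (by
    rw [ncRel, Submodule.span_le]
    rintro _ ⟨r, n, x, rfl⟩
    refine Submodule.mem_comap.2 ?_
    have e : LinearMap.rTensor X g.toAddMonoidHom.toIntLinearMap
        ((op r • n) ⊗ₜ[ℤ] x - n ⊗ₜ[ℤ] (r • x)) = (op r • g n) ⊗ₜ[ℤ] x - g n ⊗ₜ[ℤ] (r • x) := by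
      simp [map_smul]
    exact e ▸ Submodule.subset_span ⟨r, g n, x, rfl⟩)

/-- Functoriality of the tensor product in the right (left-module) variable. -/
noncomputable def ncMap (N : Type u) [AddCommGroup N] [Module Rᵐᵒᵖ N]
    {X Y : Type u} [AddCommGroup X] [Module R X] [AddCommGroup Y] [Module R Y]
    (f : X →ₗ[R] Y) : NCTensor R N X →ₗ[ℤ] NCTensor R N Y :=
  Submodule.mapQ _ _ (LinearMap.lTensor N f.toAddMonoidHom.toIntLinearMap) (by
    rw [ncRel, Submodule.span_le]
    rintro _ ⟨r, n, x, rfl⟩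
    refine Submodule.mem_comap.2 ?_
    have e : LinearMap.lTensor N f.toAddMonoidHom.toIntLinearMap
        ((op r • n) ⊗ₜ[ℤ] x - n ⊗ₜ[ℤ] (r • x)) = (op r • n) ⊗ₜ[ℤ] f x - n ⊗ₜ[ℤ] (r • f x) := by
      simp [map_smul]
    exact e ▸ Submodule.subset_span ⟨r, n, f x, rfl⟩)

lemma ncMap_mk (N : Type u) [AddCommGroup N] [Module Rᵐᵒᵖ N]
    {X Y : Type u} [AddCommGroup X] [Module R X] [AddCommGroup Y] [Module R Y]
    (f : X →ₗ[R] Y) (w : N ⊗[ℤ] X) :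
    ncMap R N f (Submodule.Quotient.mk w) =
      Submodule.Quotient.mk (LinearMap.lTensor N f.toAddMonoidHom.toIntLinearMap w) := by
  unfold ncMap
  exact Submodule.mapQ_apply (p := ncRel R N X) (q := ncRel R N Y) (LinearMap.lTensor N f.toAddMonoidHom.toIntLinearMap) w

section lemmas

variable {R}
variable {X Y Z : Type u} [AddCommGroup X] [Module R X] [AddCommGroup Y] [Module R Y]
  [AddCommGroup Z] [Module R Z]

lemma toInt_id : ((LinearMap.id : X →ₗ[R] X).toAddMonoidHom).toIntLinearMap =
    (LinearMap.id : X →ₗ[ℤ] X) := rfl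

lemma toInt_comp (f : X →ₗ[R] Y) (g : Y →ₗ[R] Z) :
    ((g ∘ₗ f).toAddMonoidHom).toIntLinearMap =
      g.toAddMonoidHom.toIntLinearMap ∘ₗ f.toAddMonoidHom.toIntLinearMap := rfl

lemma toInt_add (f g : X →ₗ[R] Y) :
    ((f + g).toAddMonoidHom).toIntLinearMap =
      f.toAddMonoidHom.toIntLinearMap + g.toAddMonoidHom.toIntLinearMap := rfl

end lemmas

/-- The functor `N ⊗[R] - : R-Mod ⥤ Ab` for a right `R`-module `N`. -/
noncomputable def ncTensorFunctor (N : Type u) [AddCommGroup N] [Module Rᵐᵒᵖ N] :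
    ModuleCat.{u} R ⥤ ModuleCat.{u} ℤ where
  obj X := ModuleCat.of ℤ (NCTensor R N X)
  map {X Y} f := ModuleCat.ofHom (ncMap R N f.hom)
  map_id X := by
    refine ModuleCat.hom_ext (LinearMap.ext fun z => ?_)
    obtain ⟨w, rfl⟩ := Submodule.Quotient.mk_surjective _ z
    show ncMap R N (LinearMap.id : X →ₗ[R] X) _ = _
    rw [ncMap_mk, toInt_id, LinearMap.lTensor_id]
    rfl
  map_comp {X Y Z} f g := by
    refine ModuleCat.hom_ext (LinearMap.ext fun z => ?_)
    obtain ⟨w, rfl⟩ := Submodule.Quotient.mk_surjective _ z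
    show ncMap R N (g.hom ∘ₗ f.hom) (Submodule.Quotient.mk w) = ncMap R N g.hom (ncMap R N f.hom (Submodule.Quotient.mk w))
    rw [ncMap_mk, ncMap_mk, ncMap_mk, toInt_comp, LinearMap.lTensor_comp]
    rfl

instance ncTensorFunctor_additive (N : Type u) [AddCommGroup N] [Module Rᵐᵒᵖ N] :
    (ncTensorFunctor R N).Additive where
  map_add {X Y f g} := by
    refine ModuleCat.hom_ext (LinearMap.ext fun z => ?_)
    obtain ⟨w, rfl⟩ := Submodule.Quotient.mk_surjective _ z
    show ncMap R N (f.hom + g.hom) (Submodule.Quotient.mk w) = ncMap R N f.hom (Submodule.Quotient.mk w) + ncMap R N g.hom (Submodule.Quotient.mk w)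
    rw [ncMap_mk, ncMap_mk, ncMap_mk, toInt_add, LinearMap.lTensor_add]
    rfl

/-- `Tor₁^R(N, Z)` for a right `R`-module `N` and a left `R`-module `Z`, defined as the value at
`Z` of the first left derived functor of the functor `N ⊗[R] -`. -/
noncomputable def ncTor1 (N : Type u) [AddCommGroup N] [Module Rᵐᵒᵖ N]
    (Z : Type u) [AddCommGroup Z] [Module R Z] : ModuleCat.{u} ℤ :=
  (((ncTensorFunctor R N).leftDerived 1).obj (ModuleCat.of R Z))

/-- `Tor₁^R(N, Z) = 0`. -/
def Tor1IsZero (N : Type u) [AddCommGroup N] [Module Rᵐᵒᵖ N]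
    (Z : Type u) [AddCommGroup Z] [Module R Z] : Prop :=
  Limits.IsZero (ncTor1 R N Z)

/-- `Ext¹_R(Z, T) = 0`, where `Ext` is the derived functor of `Hom` on the category
of left `R`-modules. -/
def Ext1IsZero (Z T : Type u) [AddCommGroup Z] [Module R Z] [AddCommGroup T] [Module R T] :
    Prop :=
  Limits.IsZero ((((Ext ℤ (ModuleCat.{u} R) 1).obj (Opposite.op (ModuleCat.of R Z))).obj
    (ModuleCat.of R T)))

end NC

open MulOpposite


section Char

variable (R : Type u) [Ring R]

/-- The right `R`-module structure on the character module `A⁺ = Hom_ℤ(A, ℚ/ℤ)` of a left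
`R`-module `A`, given by `(c • r) (a) = c (r • a)`. -/
instance charModuleRight (A : Type u) [AddCommGroup A] [Module R A] :
    Module Rᵐᵒᵖ (CharacterModule A) where
  smul r c := (c.comp (DistribMulAction.toAddMonoidHom A r.unop) : A →+ _)
  one_smul c := DFunLike.ext _ _ fun a => congrArg c (one_smul R a)
  mul_smul r s c := DFunLike.ext _ _ fun a => congrArg c (mul_smul s.unop r.unop a)
  smul_zero r := rfl
  smul_add r c c' := rfl
  add_smul r s c := DFunLike.ext _ _ fun a => by
    show c ((r.unop + s.unop) • a) = c (r.unop • a) + c (s.unop • a)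
    rw [add_smul, map_add]
  zero_smul c := DFunLike.ext _ _ fun a => by
    show c ((0 : R) • a) = 0
    rw [zero_smul, map_zero]

/-- The left `R`-module structure on the character module `N⁺ = Hom_ℤ(N, ℚ/ℤ)` of a right
`R`-module `N`, given by `(r • c) (n) = c (n • r)`. -/
instance charModuleLeft (N : Type u) [AddCommGroup N] [Module Rᵐᵒᵖ N] :
    Module R (CharacterModule N) where
  smul r c := (c.comp (DistribMulAction.toAddMonoidHom N (op r)) : N →+ _)
  one_smul c := DFunLike.ext _ _ fun n => congrArg c (one_smul Rᵐᵒᵖ n)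
  mul_smul r s c := DFunLike.ext _ _ fun n => congrArg c (mul_smul (op s) (op r) n)
  smul_zero r := rfl
  smul_add r c c' := rfl
  add_smul r s c := DFunLike.ext _ _ fun n => by
    show c ((op r + op s) • n) = c (op r • n) + c (op s • n)
    rw [add_smul, map_add]
  zero_smul c := DFunLike.ext _ _ fun n => by
    show c ((0 : Rᵐᵒᵖ) • n) = 0
    rw [zero_smul, map_zero]

end Char

section Classes

variable (R : Type u) [Ring R] (M : Type u) [AddCommGroup M] [Module R M]

/-- `T` is `M`-`𝒜`-injective if, for every `A ∈ 𝒜`, every homomorphism `A → T` extends to `M`,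
i.e. the restriction map `Hom(M, T) → Hom(A, T)` is surjective. -/
def MAInjective (𝒜 : Set (Submodule R M)) (T : Type u) [AddCommGroup T] [Module R T] : Prop :=
  ∀ A ∈ 𝒜, ∀ f : (↥A) →ₗ[R] T, ∃ g : M →ₗ[R] T, g ∘ₗ A.subtype = f

/-- `T` is strongly `M`-`𝒜`-injective if `Ext¹_R(M/A, T) = 0` for all `A ∈ 𝒜`. -/
def SMAInjective (𝒜 : Set (Submodule R M)) (T : Type u) [AddCommGroup T] [Module R T] : Prop :=
  ∀ A ∈ 𝒜, Ext1IsZero R (M ⧸ A) T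

/-- A right `R`-module `N` is `M`-`𝒜`-flat if `N ⊗ A → N ⊗ M` is injective for all `A ∈ 𝒜`. -/
def MAFlat (𝒜 : Set (Submodule R M)) (N : Type u) [AddCommGroup N] [Module Rᵐᵒᵖ N] : Prop :=
  ∀ A ∈ 𝒜, Function.Injective (ncMap R N A.subtype)

/-- A right `R`-module `N` is strongly `M`-`𝒜`-flat if `Tor₁^R(N, M/A) = 0` for all `A ∈ 𝒜`. -/
def SMAFlat (𝒜 : Set (Submodule R M)) (N : Type u) [AddCommGroup N] [Module Rᵐᵒᵖ N] : Prop :=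
  ∀ A ∈ 𝒜, Tor1IsZero R N (M ⧸ A)

end Classes

section Flat

variable (R : Type u) [Ring R]

/-- A left `R`-module `Z` is flat if tensoring with it preserves injectivity of morphisms of
right `R`-modules. -/
def FlatLeftModule (Z : Type u) [AddCommGroup Z] [Module R Z] : Prop :=
  ∀ (N N' : Type u) [AddCommGroup N] [Module Rᵐᵒᵖ N] [AddCommGroup N'] [Module Rᵐᵒᵖ N']
    (g : N' →ₗ[Rᵐᵒᵖ] N), Function.Injective g → Function.Injective (ncMapL R g Z)

/-! A projective `A` lifts maps along the surjection `T → T ⧸ S`, so extensions to `M` pass to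
quotients. Conversely, to lift `f : A → X ⧸ K` to `X`, embed `X` in an injective module `E`
by `i`; then `E ⧸ K'` (with `K'` the image of `K`) is `M`-`𝒜`-injective, so
`A → X ⧸ K ↪ E ⧸ K'` extends to `M`, and by projectivity of `M` further to `M → E`.
On `A` this map lands in `i X + K' = i X` and lifts `f`. -/

universe v

section

variable {R : Type u} [Ring R] {M : Type u} [AddCommGroup M] [Module R M]
  {𝒜 : Set (Submodule R M)}

theorem MAInjective.of_surjective (h𝒜 : ∀ A ∈ 𝒜, Module.Projective R A)
    {T T' : Type u} [AddCommGroup T] [Module R T] [AddCommGroup T'] [Module R T']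
    (hT : MAInjective R M 𝒜 T) (g : T →ₗ[R] T') (hg : Function.Surjective g) :
    MAInjective R M 𝒜 T' := by
  intro A hA f
  have := h𝒜 A hA
  obtain ⟨f', hf'⟩ := Module.projective_lifting_property g f hg
  obtain ⟨e, he⟩ := hT A hA f'
  exact ⟨g ∘ₗ e, by rw [LinearMap.comp_assoc, he, hf']⟩

theorem MAInjective.of_injective (E : Type u) [AddCommGroup E] [Module R E]
    [Module.Injective R E] : MAInjective R M 𝒜 E := fun A _ f =>
  have ⟨g, hg⟩ := Module.Injective.out A.subtype A.injective_subtype f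
  ⟨g, LinearMap.ext hg⟩

end

theorem Module.exists_injective_linearMap_to_injective {R : Type u} [Ring R]
    (X : Type u) [AddCommGroup X] [Module R X] :
    ∃ (E : Type u) (_ : AddCommGroup E) (_ : Module R E) (_ : Module.Injective R E)
      (i : X →ₗ[R] E), Function.Injective i := by
  let X' := ModuleCat.of R X
  let E : ModuleCat.{u} R := Injective.under X'
  have := Module.injective_module_of_injective_object R E (inj := Injective.injective_under X')
  exact ⟨E, inferInstance, inferInstance, this, (Injective.ι X').hom,
    (ModuleCat.mono_iff_injective _).mp inferInstance⟩

theorem Module.Projective.of_lift_to_quotient {R : Type u} [Ring R]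
    {P : Type v} [AddCommGroup P] [Module R P]
    (h : ∀ (X : Type (max u v)) [AddCommGroup X] [Module R X] (K : Submodule R X)
      (f : P →ₗ[R] X ⧸ K), ∃ l : P →ₗ[R] X, K.mkQ ∘ₗ l = f) :
    Module.Projective R P := by
  refine .of_lifting_property'' fun g hg => ?_
  let e := g.quotKerEquivOfSurjective hg
  obtain ⟨l, hl⟩ := h _ (LinearMap.ker g) e.symm
  refine ⟨l, LinearMap.ext fun p => ?_⟩
  simpa [e] using congr(e ($hl p))

theorem exists_lift_of_mapQ_comp_extends {R : Type u} [Ring R]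
    {M X E : Type*} [AddCommGroup M] [Module R M] [Module.Projective R M]
    [AddCommGroup X] [Module R X] [AddCommGroup E] [Module R E]
    (A : Submodule R M) {i : X →ₗ[R] E} (hi : Function.Injective i) (K : Submodule R X)
    (f : A →ₗ[R] X ⧸ K) (G : M →ₗ[R] E ⧸ K.map i)
    (hG : G ∘ₗ A.subtype = K.mapQ (K.map i) i (K.le_comap_map i) ∘ₗ f) :
    ∃ l : A →ₗ[R] X, K.mkQ ∘ₗ l = f := by
  obtain ⟨G', hG'⟩ := Module.projective_lifting_property (K.map i).mkQ G (K.map i).mkQ_surjective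
  have lift (a : A) : ∃ x, i x = G' a ∧ K.mkQ x = f a := by
    obtain ⟨x, hx⟩ := K.mkQ_surjective (f a)
    have hmem : G' a - i x ∈ K.map i := by
      rw [← Submodule.Quotient.mk_eq_zero, Submodule.Quotient.mk_sub, sub_eq_zero]
      simpa [← hx] using congr($hG' a).trans congr($hG a)
    obtain ⟨k, hk, hik⟩ := hmem
    refine ⟨x + k, by rw [map_add, hik, add_sub_cancel], ?_⟩
    simpa [(Submodule.Quotient.mk_eq_zero K).2 hk] using hx
  let e := LinearEquiv.ofInjective i hi
  let l := e.symm.toLinearMap ∘ₗ (G' ∘ₗ A.subtype).codRestrict _ fun a =>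
    (lift a).imp fun _ => And.left
  refine ⟨l, LinearMap.ext fun a => ?_⟩
  obtain ⟨x, hix, hx⟩ := lift a
  have : l a = x := e.injective <| by
    rw [LinearMap.comp_apply, LinearEquiv.coe_coe, e.apply_symm_apply]
    exact Subtype.ext hix.symm
  simpa [this] using hx

/-- Let `M` be a projective left `R`-module. Then every `A ∈ 𝒜` is a projective left
`R`-module if and only if every quotient module of every `M`-`𝒜`-injective left `R`-module is
`M`-`𝒜`-injective. -/
theorem stmt17 (R : Type u) [Ring R] (M : Type u) [AddCommGroup M] [Module R M]
    (𝒜 : Set (Submodule R M)) [Module.Projective R M] :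
    (∀ A ∈ 𝒜, Module.Projective R (↥A)) ↔
      (∀ (T : Type u) [AddCommGroup T] [Module R T], MAInjective R M 𝒜 T →
        ∀ S : Submodule R T, MAInjective R M 𝒜 (T ⧸ S)) := by
  refine ⟨fun h T _ _ hT S => hT.of_surjective h S.mkQ S.mkQ_surjective, fun h A hA => ?_⟩
  refine Module.Projective.of_lift_to_quotient fun X _ _ K f => ?_
  obtain ⟨E, _, _, _, i, hi⟩ := Module.exists_injective_linearMap_to_injective (R := R) X
  obtain ⟨G, hG⟩ := h E (.of_injective E) (K.map i) A hA (K.mapQ _ i (K.le_comap_map i) ∘ₗ f)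
  exact exists_lift_of_mapQ_comp_extends A hi K f G hG
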